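/- arXiv:2605.14204 — 3 statements merged into one kernel-verified Lean document; each statement's English description precedes it below -/
import Mathlib

section
/- Under the post-attack recursion α_{n+1} = λ_f α_n + w_s, β_{n+1} = λ_f β_n with 0 < λ_f < 1, w_s > 0, α_0 ≥ 0, β_0 > 0, the trust sequence T_n = α_n/(α_n + β_n) is strictly increasing in n. -/
/-- The trust sequence is strictly increasing after the attack ends. -/
theorem stmt_3 (lf ws : ℝ) (hlf : 0 < lf) (hlf1 : lf < 1) (hws : 0 < ws)
    (α β : ℕ → ℝ) (hα0 : 0 ≤ α 0) (hβ0 : 0 < β 0)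
    (hαrec : ∀ n, α (n + 1) = lf * α n + ws)
    (hβrec : ∀ n, β (n + 1) = lf * β n)
    (T : ℕ → ℝ) (hT : ∀ n, T n = α n / (α n + β n)) :
    StrictMono T := by
  have hαpos : ∀ n, 0 ≤ α n := by
    intro n
    induction n with
    | zero => exact hα0
    | succ k ih =>
      rw [hαrec]
      positivity
  have hβpos : ∀ n, 0 < β n := by
    intro n
    induction n with
    | zero => exact hβ0
    | succ k ih =>
      rw [hβrec]
      positivity
  apply strictMono_nat_of_lt_succ
  intro n
  rw [hT, hT, hαrec, hβrec]
  have h1 : 0 < α n + β n := by have := hαpos n; have := hβpos n; linarith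
  have h2 : 0 < lf * α n + ws + lf * β n := by
    have := hαpos n; have := hβpos n; nlinarith
  rw [div_lt_div_iff₀ h1 h2]
  have := hβpos n
  have := hαpos n
  nlinarith
end

section
/- Fix λ_f ∈ (0,1), w_s > 0, w_f > 0, and suppose the evidence state at attack termination is the fully-eroded stationary state α_0 = 0, β_0 = B := w_f/(1-λ_f) (i.e., trust T_0 = 0). Let T_n be given by the recovery law T_n = (A + (0 - A)λ_f^n)/(A + (B - A)λ_f^n) with A = w_s/(1-λ_f). Then for any target level τ ∈ (0,1), T_n ≥ τ if and only if λ_f^n ≤ (1-τ)A / (A + τ(B - A)) — equivalently the recovery time n*(τ) = min{n : T_n ≥ τ} satisfies n*(τ) ≤ 1 + (1/log(1/λ_f)) · log( (A + τ(B-A)) / ((1-τ)A) ), and in particular n*(τ) grows at most logarithmically in the ratio w_f/w_s. -/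
open Real

/-- The recovery law `T_n` written as a function of `p = λ_f ^ n`, starting from `(α, β) = (0, B)`. -/
noncomputable def recoveryTrust (A B p : ℝ) : ℝ := (A + (0 - A) * p) / (A + (B - A) * p)

theorem le_recoveryTrust_iff {A B τ p : ℝ} (hA : 0 < A) (hB : 0 < B)
    (hτ : τ ∈ Set.Ioo (0 : ℝ) 1) (hp0 : 0 < p) (hp1 : p ≤ 1) :
    τ ≤ recoveryTrust A B p ↔ p ≤ (1 - τ) * A / (A + τ * (B - A)) := by
  obtain ⟨hτ0, hτ1⟩ := hτ
  have hden : 0 < A + (B - A) * p := by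
    nlinarith [mul_nonneg (sub_nonneg.2 hp1) hA.le, mul_pos hp0 hB]
  have hQ : 0 < A + τ * (B - A) := by nlinarith
  rw [recoveryTrust, le_div_iff₀ hden, le_div_iff₀ hQ]
  constructor <;> intro h <;> linarith

theorem exists_pow_le_div_of_log_bound {r a b : ℝ} (hr0 : 0 < r) (hr1 : r < 1)
    (ha : 0 < a) (hab : a ≤ b) :
    ∃ n : ℕ, r ^ n ≤ a / b ∧ (n : ℝ) ≤ 1 + 1 / log (1 / r) * log (b / a) := by
  have hL : 0 < log (1 / r) := log_pos (one_lt_one_div hr0 hr1)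
  have hba : 0 < b / a := div_pos (ha.trans_le hab) ha
  set x := log (b / a) / log (1 / r)
  have hx0 : 0 ≤ x := div_nonneg (log_nonneg ((one_le_div ha).mpr hab)) hL.le
  refine ⟨⌈x⌉₊, ?_, ?_⟩
  · have hlog : log (b / a) ≤ ⌈x⌉₊ * log (1 / r) := (div_le_iff₀ hL).mp (Nat.le_ceil x)
    have : b / a ≤ (1 / r) ^ ⌈x⌉₊ := (le_pow_iff_log_le hba (by positivity)).mpr hlog
    rwa [one_div_pow, le_one_div hba (by positivity), one_div_div] at this
  · calc (⌈x⌉₊ : ℝ) ≤ x + 1 := (Nat.ceil_lt_add_one hx0).le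
      _ = 1 + 1 / log (1 / r) * log (b / a) := by ring

/-- Recovery from full trust erosion: threshold characterization and logarithmic
recovery-time bound. -/
theorem stmt_4 (lf ws wf : ℝ) (hlf : 0 < lf) (hlf1 : lf < 1)
    (hws : 0 < ws) (hwf : 0 < wf)
    (A B : ℝ) (hA : A = ws / (1 - lf)) (hB : B = wf / (1 - lf))
    (T : ℕ → ℝ)
    (hT : ∀ n, T n = (A + (0 - A) * lf ^ n) / (A + (B - A) * lf ^ n))
    (τ : ℝ) (hτ : τ ∈ Set.Ioo (0 : ℝ) 1) :
    (∀ n, τ ≤ T n ↔ lf ^ n ≤ (1 - τ) * A / (A + τ * (B - A))) ∧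
    (∃ n : ℕ, τ ≤ T n ∧
      (n : ℝ) ≤ 1 + (1 / Real.log (1 / lf)) *
        Real.log ((A + τ * (B - A)) / ((1 - τ) * A))) := by
  have hA0 : 0 < A := hA ▸ div_pos hws (sub_pos.2 hlf1)
  have hB0 : 0 < B := hB ▸ div_pos hwf (sub_pos.2 hlf1)
  have hthreshold : ∀ n, τ ≤ T n ↔ lf ^ n ≤ (1 - τ) * A / (A + τ * (B - A)) := fun n => by
    rw [hT n]
    exact le_recoveryTrust_iff hA0 hB0 hτ (pow_pos hlf n) (pow_le_one₀ hlf.le hlf1.le)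
  have hfloor : 0 < (1 - τ) * A := mul_pos (sub_pos.2 hτ.2) hA0
  have hgap : (1 - τ) * A ≤ A + τ * (B - A) := by nlinarith [mul_pos hτ.1 hB0]
  obtain ⟨n, hn, hbound⟩ := exists_pow_le_div_of_log_bound hlf hlf1 hfloor hgap
  exact ⟨hthreshold, n, (hthreshold n).2 hn, hbound⟩
end

section
/- Consider the two-link network with cost functions c_1(x) = c_0 + b x and c_2(x) = c_0 + b(1-x) for flow split x ∈ [0,1], constants c_0 ≥ 0, b > 0, attacked link 1 with perceived costs z_1(x) = (1-u)c_1(x) and z_2(x) = c_2(x) where u = γ λ̄ T ∈ [0,1) is the effective attack discount. Under logit route choice x = σ(θ(z_2 - z_1)) with σ the standard logistic function and θ > 0, the fixed-point equation x = σ(θ(z_2(x) - z_1(x))) has a unique solution x*(u) ∈ [0,1], and x*(u) is strictly increasing in u (more effective compliance-weighted attack pushes more flow onto the falsely under-reported link). -/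
open Set

/-- Logistic function. -/
noncomputable def logistic (h : ℝ) : ℝ := 1 / (1 + Real.exp (-h))

lemma logistic_pos (h : ℝ) : 0 < logistic h := by
  unfold logistic; positivity

lemma logistic_lt_one (h : ℝ) : logistic h < 1 := by
  unfold logistic
  rw [div_lt_one (by positivity)]
  linarith [Real.exp_pos (-h)]

lemma logistic_strictMono : StrictMono logistic := by
  intro a b hab
  unfold logistic
  have h1 : (0:ℝ) < 1 + Real.exp (-b) := by positivity
  have h2 : (0:ℝ) < 1 + Real.exp (-a) := by positivity
  rw [div_lt_div_iff₀ h2 h1]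
  have := Real.exp_lt_exp.mpr (neg_lt_neg hab)
  nlinarith

lemma logistic_continuous : Continuous logistic := by
  unfold logistic
  apply Continuous.div continuous_const
  · continuity
  · intro x; positivity

/-- Two-link logit benchmark: for each effective attack discount `u ∈ [0,1)`
the fixed-point equation has a unique solution in `[0,1]`, and the solution is
strictly increasing in `u`. -/
theorem stmt_11 (c0 b θ : ℝ) (hc0 : 0 ≤ c0) (hb : 0 < b) (hθ : 0 < θ)
    (c1 c2 : ℝ → ℝ) (hc1 : ∀ x, c1 x = c0 + b * x)
    (hc2 : ∀ x, c2 x = c0 + b * (1 - x))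
    (z1 z2 : ℝ → ℝ → ℝ)
    (hz1 : ∀ u x, z1 u x = (1 - u) * c1 x) (hz2 : ∀ u x, z2 u x = c2 x) :
    (∀ u ∈ Ico (0 : ℝ) 1,
      ∃! x, x ∈ Icc (0 : ℝ) 1 ∧ x = logistic (θ * (z2 u x - z1 u x))) ∧
    (∀ u u' : ℝ, u ∈ Ico (0 : ℝ) 1 → u' ∈ Ico (0 : ℝ) 1 → u < u' →
      ∀ x x' : ℝ, x ∈ Icc (0 : ℝ) 1 → x' ∈ Icc (0 : ℝ) 1 →
        x = logistic (θ * (z2 u x - z1 u x)) →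
        x' = logistic (θ * (z2 u' x' - z1 u' x')) → x < x') := by
  have key : ∀ u x : ℝ, θ * (z2 u x - z1 u x)
      = θ * (u * c0 + b - b * (2 - u) * x) := by
    intro u x; rw [hz1, hz2, hc1, hc2]; ring
  constructor
  · intro u hu
    obtain ⟨hu0, hu1⟩ := hu
    have h2u : 0 < 2 - u := by linarith
    set f : ℝ → ℝ := fun x => logistic (θ * (u * c0 + b - b * (2 - u) * x))
      with hf
    have hdec : StrictAnti f := by
      intro x y hxy
      apply logistic_strictMono
      have h1 : b * (2 - u) * x < b * (2 - u) * y := by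
        apply mul_lt_mul_of_pos_left hxy (by positivity)
      nlinarith
    have hcont : Continuous f :=
      logistic_continuous.comp (by continuity)
    set g : ℝ → ℝ := fun x => f x - x with hg
    have hgcont : Continuous g := hcont.sub continuous_id
    have hg0 : 0 < g 0 := by
      have := logistic_pos (θ * (u * c0 + b - b * (2 - u) * 0))
      simpa [hg, hf] using this
    have hg1 : g 1 < 0 := by
      have := logistic_lt_one (θ * (u * c0 + b - b * (2 - u) * 1))
      simp only [hg, hf]
      linarith
    have hsub : Icc (g 1) (g 0) ⊆ g '' Icc (0:ℝ) 1 :=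
      intermediate_value_Icc' (by norm_num) hgcont.continuousOn
    obtain ⟨x, hxmem, hgx⟩ := hsub ⟨le_of_lt hg1, le_of_lt hg0⟩
    have hfx : f x = x := by
      have : f x - x = 0 := hgx
      linarith
    refine ⟨x, ⟨hxmem, by rw [key]; exact hfx.symm⟩, ?_⟩
    rintro y ⟨hymem, hyeq⟩
    rw [key] at hyeq
    have hfy : f y = y := hyeq.symm
    rcases lt_trichotomy y x with h | h | h
    · exfalso; have := hdec h; rw [hfx, hfy] at this; linarith
    · exact h
    · exfalso; have := hdec h; rw [hfx, hfy] at this; linarith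
  · intro u u' hu hu' huu' x x' hx hx' hfx hfx'
    rw [key] at hfx hfx'
    have hx0 : 0 < x := hfx ▸ logistic_pos _
    by_contra hcon
    push_neg at hcon
    -- x' ≤ x
    have harg1 : θ * (u' * c0 + b - b * (2 - u') * x)
        ≤ θ * (u' * c0 + b - b * (2 - u') * x') := by
      have h2u : 0 < 2 - u' := by linarith [hu'.2]
      have : b * (2 - u') * x' ≤ b * (2 - u') * x :=
        mul_le_mul_of_nonneg_left hcon (by positivity)
      nlinarith
    have harg2 : θ * (u * c0 + b - b * (2 - u) * x)
        < θ * (u' * c0 + b - b * (2 - u') * x) := by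
      have : (u' - u) * (c0 + b * x) > 0 := by
        apply mul_pos (by linarith)
        nlinarith
      nlinarith
    have h1 : logistic (θ * (u' * c0 + b - b * (2 - u') * x))
        ≤ logistic (θ * (u' * c0 + b - b * (2 - u') * x')) :=
      logistic_strictMono.monotone harg1
    have h2 : logistic (θ * (u * c0 + b - b * (2 - u) * x))
        < logistic (θ * (u' * c0 + b - b * (2 - u') * x)) :=
      logistic_strictMono harg2
    rw [← hfx] at h2
    rw [← hfx'] at h1
    linarith
end
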